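/- Let n, r > 1 be integers and N = (r-1)n + 1. If A_1, ..., A_N are nonempty subsets of an n-element set, then there exist nonempty pairwise disjoint subsets J_1, ..., J_r of {1,...,N} such that the union of A_i over i in J_1 equals the union of A_i over i in J_2, and so on, all r unions being equal. -/

import Mathlib

/-!
Sarkaria's tensor trick. Tensor each `x i ∈ ℝ^ι` with the vertices `v 0, …, v m` of a simplex
centred at `0` in `ℝ^m`. Each family `(x i ⊗ v j)_j` has `0` in its convex hull, and there are more
than `m * |ι| = dim (ℝ^ι ⊗ ℝ^m)` families, so the colourful Carathéodory theorem picks one vector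
`x i ⊗ v (σ i)` from each with `0 = ∑ c i • x i ⊗ v (σ i)` for convex weights `c`. The only linear
relation among the `v j` is `∑ v j = 0`, so the fibre sums `∑_{σ i = j} c i • x i` all agree.
For Lindström's theorem take `x i` the indicator vector of `A i`: equal nonnegative vectors have equal
supports, and the support of the `j`-th fibre sum is the union of the `A i` with `σ i = j`, `c i > 0`.
-/

open Set

section Convex

variable {E κ : Type*} [AddCommGroup E] [Module ℝ E] [Fintype κ]

theorem mem_convexHull_range_iff {f : κ → E} {x : E} :
    x ∈ convexHull ℝ (range f) ↔ ∃ w ∈ stdSimplex ℝ κ, ∑ i, w i • f i = x := by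
  classical
  have hf : range f =
      Fintype.linearCombination ℝ f '' range fun i j => if i = j then 1 else 0 := by
    rw [← Set.range_comp]
    congr 1
    funext i
    simp [Fintype.linearCombination_apply]
  rw [hf, ← LinearMap.image_convexHull, convexHull_basis_eq_stdSimplex]
  simp [Fintype.linearCombination_apply]

theorem exists_apply_nonpos_of_zero_mem_convexHull {s : Set E} (h : (0 : E) ∈ convexHull ℝ s)
    (φ : E →ₗ[ℝ] ℝ) : ∃ x ∈ s, φ x ≤ 0 := by
  by_contra! hpos
  have h0 : 0 < φ 0 := convexHull_min hpos (convex_halfSpace_gt φ.isLinear 0) h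
  simp at h0

theorem AffineIndependent.linearIndependent_of_apply_eq {ι : Type*} {z : ι → E}
    (hz : AffineIndependent ℝ z) (φ : E →ₗ[ℝ] ℝ) {a : ℝ} (ha : a ≠ 0) (hφ : ∀ i, φ (z i) = a) :
    LinearIndependent ℝ z := by
  rw [linearIndependent_iff']
  intro s w hw
  have hsum : ∑ i ∈ s, w i = 0 := by
    have := congrArg φ hw
    simp only [map_sum, map_smul, hφ, smul_eq_mul, map_zero, ← Finset.sum_mul] at this
    exact (mul_eq_zero.1 this).resolve_right ha
  exact hz.eq_zero_of_sum_eq_zero hsum hw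

/-- Carathéodory's theorem on a face: the points of a positive convex combination for `y` lie on
the hyperplane `φ = φ y`, which misses `0`, so an affinely independent choice of them is linearly
independent and leaves out at least one of the `f i`. -/
theorem exists_mem_convexHull_image_compl_singleton [FiniteDimensional ℝ E] {f : κ → E}
    (hκ : Module.finrank ℝ E < Fintype.card κ) (φ : E →ₗ[ℝ] ℝ) {y : E}
    (hy : y ∈ convexHull ℝ (range f)) (hφy : φ y ≠ 0) (hφ : ∀ i, φ y ≤ φ (f i)) :
    ∃ i₀, y ∈ convexHull ℝ (f '' {i₀}ᶜ) := by
  obtain ⟨ι, _, z, w, hzf, hz, hw0, hw1, rfl⟩ := eq_pos_convex_span_of_mem_convexHull hy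
  have hφz : ∀ k, φ (z k) = φ (∑ k, w k • z k) := by
    have hzero : ∑ k, w k * (φ (z k) - φ (∑ k, w k • z k)) = 0 := by
      simp only [mul_sub, Finset.sum_sub_distrib, ← Finset.sum_mul, hw1, one_mul, map_sum,
        map_smul, smul_eq_mul, sub_self]
    intro k
    have hk := (Finset.sum_eq_zero_iff_of_nonneg fun k _ => mul_nonneg (hw0 k).le
      (sub_nonneg.2 (by obtain ⟨i, hi⟩ := hzf (mem_range_self k); exact hi ▸ hφ i))).1
      hzero k (Finset.mem_univ k)
    linarith [(mul_eq_zero.1 hk).resolve_left (hw0 k).ne']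
  have hcard : Fintype.card ι < Fintype.card κ :=
    ((hz.linearIndependent_of_apply_eq φ hφy hφz).fintype_card_le_finrank).trans_lt hκ
  choose g hg using fun k => hzf (mem_range_self k)
  obtain ⟨i₀, hi₀⟩ : ∃ i₀, i₀ ∉ range g := by
    by_contra! hsurj
    exact hcard.not_ge (Fintype.card_le_of_surjective g fun i => hsurj i)
  exact ⟨i₀, mem_convexHull_of_exists_fintype w z (fun k => (hw0 k).le) hw1
    (fun k => ⟨g k, fun h => hi₀ ⟨k, h⟩, hg k⟩) rfl⟩

end Convex

section InnerProduct

variable {F : Type*} [NormedAddCommGroup F] [InnerProductSpace ℝ F]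

theorem real_inner_self_le_inner_of_isMinOn_norm {K : Set F} (hK : Convex ℝ K) {y w : F}
    (hy : y ∈ K) (hmin : IsMinOn (‖·‖) K y) (hw : w ∈ K) : inner ℝ y y ≤ inner ℝ y w := by
  have : Nonempty K := ⟨⟨y, hy⟩⟩
  have hinf : ‖0 - y‖ = ⨅ v : K, ‖0 - (v : F)‖ := by
    simp only [zero_sub, norm_neg]
    exact le_antisymm (le_ciInf fun v => hmin v.2)
      (ciInf_le ⟨0, by rintro _ ⟨v, rfl⟩; positivity⟩ (⟨y, hy⟩ : K))
  have := (norm_eq_iInf_iff_real_inner_le_zero hK hy).1 hinf w hw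
  rw [zero_sub, inner_neg_left, inner_sub_right] at this
  linarith

theorem colorful_caratheodory [FiniteDimensional ℝ F] {κ α : Type*} [Fintype κ] [Finite α]
    (hκ : Module.finrank ℝ F < Fintype.card κ) (X : κ → α → F)
    (hX : ∀ i, (0 : F) ∈ convexHull ℝ (range (X i))) :
    ∃ σ : κ → α, (0 : F) ∈ convexHull ℝ (range fun i => X i (σ i)) := by
  classical
  set K : (κ → α) → Set F := fun σ => convexHull ℝ (range fun i => X i (σ i))
  obtain ⟨i⟩ : Nonempty κ := Fintype.card_pos_iff.1 (by omega)
  have : Nonempty α :=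
    range_nonempty_iff_nonempty.1 (convexHull_nonempty_iff.1 (Set.nonempty_of_mem (hX i)))
  have hU : IsCompact (⋃ σ, K σ) := isCompact_iUnion fun σ =>
    (finite_range _).isCompact_convexHull (𝕜 := ℝ)
  obtain ⟨y, hyU, hmin⟩ := hU.exists_isMinOn (nonempty_iUnion.2 ⟨Classical.arbitrary _,
    (range_nonempty_iff_nonempty.2 ⟨i⟩).convexHull⟩) continuous_norm.continuousOn
  obtain ⟨σ, hyσ⟩ := mem_iUnion.1 hyU
  refine ⟨σ, by_contra fun h0 => ?_⟩
  have hy0 : y ≠ 0 := by rintro rfl; exact h0 hyσ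
  have hface : ∀ σ', y ∈ K σ' → ∀ w ∈ K σ', inner ℝ y y ≤ inner ℝ y w := fun σ' hy' w hw =>
    real_inner_self_le_inner_of_isMinOn_norm (convex_convexHull ℝ _) hy'
      (hmin.on_subset (subset_iUnion K σ')) hw
  -- Swapping the point of colour `i₀`, which `y` does not need, for one with `⟪y, ·⟫ ≤ 0` gives a
  -- hull that still contains `y` but also a point of norm less than `‖y‖`.
  obtain ⟨i₀, hi₀⟩ := exists_mem_convexHull_image_compl_singleton hκ (innerₗ F y) hyσ
    (by simpa using hy0) fun i => by
      simpa using hface σ hyσ _ (subset_convexHull ℝ _ (mem_range_self i))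
  obtain ⟨_, ⟨a, rfl⟩, ha⟩ := exists_apply_nonpos_of_zero_mem_convexHull (hX i₀) (innerₗ F y)
  set σ' := Function.update σ i₀ a
  have hyσ' : y ∈ K σ' := convexHull_mono (by
    rintro _ ⟨i, hi, rfl⟩
    exact ⟨i, by simp [σ', Function.update_of_ne (Set.mem_compl_singleton_iff.1 hi)]⟩) hi₀
  have hs : X i₀ a ∈ K σ' := subset_convexHull ℝ _ ⟨i₀, by simp [σ']⟩
  have := hface σ' hyσ' _ hs
  have := real_inner_self_pos.2 hy0
  simp only [innerₗ_apply_apply] at ha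
  linarith

end InnerProduct

/-- The vertices `e 0, …, e (m - 1), -(e 0 + ⋯ + e (m - 1))` of a simplex in `ℝ^m` centred at `0`. -/
def simplexVertex (m : ℕ) (j : Fin (m + 1)) (q : Fin m) : ℝ :=
  (if j = q.castSucc then 1 else 0) - if j = Fin.last m then 1 else 0

theorem sum_mul_simplexVertex {m : ℕ} (a : Fin (m + 1) → ℝ) (q : Fin m) :
    ∑ j, a j * simplexVertex m j q = a q.castSucc - a (Fin.last m) := by
  simp [simplexVertex, mul_sub, Finset.sum_sub_distrib]

theorem sum_simplexVertex {m : ℕ} (q : Fin m) : ∑ j, simplexVertex m j q = 0 := by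
  simpa using sum_mul_simplexVertex 1 q

theorem eq_of_sum_mul_simplexVertex_eq_zero {m : ℕ} {a : Fin (m + 1) → ℝ}
    (ha : ∀ q, ∑ j, a j * simplexVertex m j q = 0) (j k : Fin (m + 1)) : a j = a k := by
  have hlast : ∀ j, a j = a (Fin.last m) := Fin.lastCases rfl fun q => by
    linarith [sum_mul_simplexVertex a q, ha q]
  rw [hlast j, hlast k]

/-- Sarkaria's linear form of Tverberg's theorem. -/
theorem exists_fiberwise_sum_smul_eq {ι κ : Type*} [Fintype ι] [Fintype κ] {m : ℕ}
    (hκ : m * Fintype.card ι < Fintype.card κ) (x : κ → ι → ℝ) :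
    ∃ (σ : κ → Fin (m + 1)) (c : κ → ℝ), c ∈ stdSimplex ℝ κ ∧
      ∀ j k, ∑ i with σ i = j, c i • x i = ∑ i with σ i = k, c i • x i := by
  classical
  let X : κ → Fin (m + 1) → EuclideanSpace ℝ (ι × Fin m) := fun i j =>
    WithLp.toLp 2 fun pq => x i pq.1 * simplexVertex m j pq.2
  have hX : ∀ i, (0 : EuclideanSpace ℝ (ι × Fin m)) ∈ convexHull ℝ (range (X i)) := by
    intro i
    have huniform : (fun _ => (1 : ℝ) / (m + 1)) ∈ stdSimplex ℝ (Fin (m + 1)) := by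
      refine ⟨fun _ => by positivity, ?_⟩
      rw [Finset.sum_const, Finset.card_univ, Fintype.card_fin, nsmul_eq_mul, Nat.cast_succ]
      field_simp
    refine mem_convexHull_range_iff.2 ⟨_, huniform, ?_⟩
    ext pq
    simp [X, ← Finset.mul_sum, sum_simplexVertex]
  have hdim : Module.finrank ℝ (EuclideanSpace ℝ (ι × Fin m)) < Fintype.card κ := by
    simpa [mul_comm] using hκ
  obtain ⟨σ, hσ⟩ := colorful_caratheodory hdim X hX
  obtain ⟨c, hc, hcX⟩ := mem_convexHull_range_iff.1 hσ
  refine ⟨σ, c, hc, fun j k => funext fun p => ?_⟩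
  refine eq_of_sum_mul_simplexVertex_eq_zero
    (a := fun j => (∑ i with σ i = j, c i • x i) p) (fun q => ?_) j k
  calc ∑ j, (∑ i with σ i = j, c i • x i) p * simplexVertex m j q
      = ∑ j, ∑ i with σ i = j, c i * (x i p * simplexVertex m (σ i) q) := by
        refine Finset.sum_congr rfl fun j _ => ?_
        rw [Finset.sum_apply, Finset.sum_mul]
        refine Finset.sum_congr rfl fun i hi => ?_
        rw [(Finset.mem_filter.1 hi).2, Pi.smul_apply, smul_eq_mul, mul_assoc]
    _ = ∑ i, c i * (x i p * simplexVertex m (σ i) q) := Finset.sum_fiberwise _ _ _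
    _ = 0 := by simpa [X] using congrArg (· (p, q)) hcX

theorem mem_biUnion_filter_pos_iff {κ α : Type*} [DecidableEq α] (s : Finset κ)
    (A : κ → Finset α) {c : κ → ℝ} (hc : ∀ i, 0 ≤ c i) (p : α) :
    p ∈ {i ∈ s | 0 < c i}.biUnion A ↔
      0 < (∑ i ∈ s, c i • fun q => if q ∈ A i then (1 : ℝ) else 0) p := by
  simp only [Finset.sum_apply, Pi.smul_apply, smul_eq_mul]
  rw [Finset.sum_pos_iff_of_nonneg fun i _ =>
    mul_nonneg (hc i) (by split_ifs <;> norm_num)]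
  simp only [Finset.mem_biUnion, Finset.mem_filter, and_assoc]
  refine exists_congr fun i => and_congr_right fun _ => ?_
  by_cases h : p ∈ A i <;> simp [h]

theorem lindstrom_general (n r : ℕ) (hr : 1 < r)
    (A : Fin ((r - 1) * n + 1) → Finset (Fin n)) (hA : ∀ i, (A i).Nonempty) :
    ∃ J : Fin r → Finset (Fin ((r - 1) * n + 1)),
      (∀ j, (J j).Nonempty) ∧
      (∀ j k, j ≠ k → Disjoint (J j) (J k)) ∧
      (∀ j k, (J j).biUnion A = (J k).biUnion A) := by
  classical
  obtain ⟨m, rfl⟩ : ∃ m, r = m + 1 := ⟨r - 1, by omega⟩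
  obtain ⟨σ, c, ⟨hc0, hc1⟩, hσ⟩ := exists_fiberwise_sum_smul_eq (m := m) (by simp)
    fun i p => if p ∈ A i then (1 : ℝ) else 0
  set J : Fin (m + 1) → Finset (Fin ((m + 1 - 1) * n + 1)) := fun j =>
    {i ∈ {i | σ i = j} | 0 < c i}
  have hJ : ∀ j k, (J j).biUnion A = (J k).biUnion A := fun j k => by
    ext p
    simp only [J, mem_biUnion_filter_pos_iff _ _ hc0, hσ j k]
  obtain ⟨i, -, hi⟩ := Finset.exists_lt_of_sum_lt
    (by rw [Finset.sum_const_zero, hc1]; exact one_pos : ∑ i, (0 : ℝ) < ∑ i, c i)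
  refine ⟨J, fun j => ?_, fun j k hjk => ?_, hJ⟩
  · have hU : ((J (σ i)).biUnion A).Nonempty :=
      (hA i).mono (Finset.subset_biUnion_of_mem A (by simp [J, hi]))
    obtain ⟨i', hi', -⟩ := Finset.biUnion_nonempty.1 (hJ (σ i) j ▸ hU)
    exact ⟨i', hi'⟩
  · exact Finset.disjoint_filter_filter (Finset.disjoint_filter.2 fun i _ h => h ▸ hjk)

/-- Lindström's theorem: if N = (r-1)n + 1 and A_1, ..., A_N are nonempty subsets of an
n-element set, then there are nonempty pairwise disjoint index sets J_1, ..., J_r with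
⋃_{i ∈ J_1} A_i = ⋯ = ⋃_{i ∈ J_r} A_i. -/
theorem lindstrom (n r : ℕ) (hn : 1 < n) (hr : 1 < r)
    (A : Fin ((r - 1) * n + 1) → Finset (Fin n)) (hA : ∀ i, (A i).Nonempty) :
    ∃ J : Fin r → Finset (Fin ((r - 1) * n + 1)),
      (∀ j, (J j).Nonempty) ∧
      (∀ j k, j ≠ k → Disjoint (J j) (J k)) ∧
      (∀ j k, (J j).biUnion A = (J k).biUnion A) :=
  lindstrom_general n r hr A hA
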